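/- arXiv:2101.06178 — 3 statements merged into one kernel-verified Lean document; each statement's English description precedes it below -/
import Mathlib

section
/- Let δ > 1, let (M, θ) define an Ising model on n vertices, and let v ≠ u be two of its vertices. Define an Ising model (M', θ') on n+1 vertices (the new vertex denoted v*) as follows: θ'_v = θ_v + δ, θ'_u = θ_u + δ, θ'_{v*} = 2δ, and θ'_w = θ_w for all other w; M'_{v,u} = M_{v,u} − δ, M'_{v,v*} = M'_{u,v*} = −2δ, M'_{w,v*} = 0 for w ∉ {v,u}, and M'_{i,j} = M_{i,j} for all other pairs. Let X ∼ I_{(M,θ)} and X' ∼ I_{(M',θ')}. Then: (1) the total variation distance between the law of X and the law of the restriction of X' to the original n vertices is at most 5e^{−4δ}; and (2) P[X'_{v*} ≠ AND(X'_v, X'_u)] ≥ 1 − 5e^{−4δ}, where AND(a,b) = 1 if a = b = 1 and AND(a,b) = −1 otherwise. -/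
open Finset Real
open scoped Classical

noncomputable section

/-- The real spin value (`±1`) of a Boolean configuration entry. -/
def spin (s : Bool) : ℝ := if s then 1 else -1

/-- The unnormalized Ising weight `exp(θ·x + ½ x·Mx)` of a configuration. -/
def isingWt {n : ℕ} (M : Matrix (Fin n) (Fin n) ℝ) (θ : Fin n → ℝ) (σ : Fin n → Bool) : ℝ :=
  Real.exp ((∑ i, θ i * spin (σ i)) + (1 / 2) * ∑ i, ∑ j, spin (σ i) * M i j * spin (σ j))

/-- The Ising probability of a single configuration. -/
def isingProb {n : ℕ} (M : Matrix (Fin n) (Fin n) ℝ) (θ : Fin n → ℝ) (σ : Fin n → Bool) : ℝ :=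
  isingWt M θ σ / ∑ τ : Fin n → Bool, isingWt M θ τ

/-- The Ising probability of an event `A`. -/
def isingPr {n : ℕ} (M : Matrix (Fin n) (Fin n) ℝ) (θ : Fin n → ℝ)
    (A : (Fin n → Bool) → Prop) : ℝ :=
  ∑ σ ∈ Finset.univ.filter (fun σ => A σ), isingProb M θ σ

/-- The Ising conditional probability `P[A | B]`. -/
def isingCond {n : ℕ} (M : Matrix (Fin n) (Fin n) ℝ) (θ : Fin n → ℝ)
    (A B : (Fin n → Bool) → Prop) : ℝ :=
  isingPr M θ (fun σ => A σ ∧ B σ) / isingPr M θ B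

/-- The edge weights of the Ising model `(M', θ')` obtained from `(M, θ)` by fusing a NAND gadget
`J_δ` onto the vertices `v, u` and a new vertex `v* = n` (the last vertex of `Fin (n+1)`):
the weight of `{v, u}` is decreased by `δ`, `v*` is joined to `v` and `u` by edges of weight
`-2δ`, and all other weights are unchanged. -/
def extM {n : ℕ} (M : Matrix (Fin n) (Fin n) ℝ) (v u : Fin n) (δ : ℝ) :
    Matrix (Fin (n + 1)) (Fin (n + 1)) ℝ := fun i j =>
  if hi : (i : ℕ) < n then
    if hj : (j : ℕ) < n then
      M ⟨i, hi⟩ ⟨j, hj⟩ +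
        (if ((⟨i, hi⟩ : Fin n) = v ∧ (⟨j, hj⟩ : Fin n) = u) ∨
            ((⟨i, hi⟩ : Fin n) = u ∧ (⟨j, hj⟩ : Fin n) = v) then -δ else 0)
    else if (⟨i, hi⟩ : Fin n) = v ∨ (⟨i, hi⟩ : Fin n) = u then -2 * δ else 0
  else
    if hj : (j : ℕ) < n then
      if (⟨j, hj⟩ : Fin n) = v ∨ (⟨j, hj⟩ : Fin n) = u then -2 * δ else 0
    else 0

/-- The biases of the fused model: those of `v` and `u` are increased by `δ`, the new vertex `v*`
has bias `2δ`, and all other biases are unchanged. -/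
def extθ {n : ℕ} (θ : Fin n → ℝ) (v u : Fin n) (δ : ℝ) : Fin (n + 1) → ℝ := fun i =>
  if hi : (i : ℕ) < n then
    θ ⟨i, hi⟩ + (if (⟨i, hi⟩ : Fin n) = v ∨ (⟨i, hi⟩ : Fin n) = u then δ else 0)
  else 2 * δ

/-!
Summing out the new spin `v*` multiplies the weight of a configuration `x` of the old vertices by
`F(x_v, x_u) = ∑ₛ exp E(x_v, x_u, s)`, where `E` is the energy of the gadget. It equals `3δ` when
`s` is the NAND of `x_v, x_u` and is at most `-δ` otherwise, so `F` lies in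
`[e^{3δ}, e^{3δ}(1 + e^{-4δ})]`. Reweighting a distribution by a factor that is constant up to
relative error `ε` moves it by at most `ε` in `ℓ¹`, and the NAND term alone carries at least
`1/(1 + ε) ≥ 1 - ε` of the reweighted mass.
-/

section Reweighting

variable {α : Type*} [Fintype α] [Nonempty α] {w f : α → ℝ} {c ε : ℝ}

lemma sum_abs_div_sum_sub_mul_div_sum_le (hw : ∀ x, 0 < w x) (hc : 0 < c)
    (hf : ∀ x, c ≤ f x ∧ f x ≤ c * (1 + ε)) :
    ∑ x, |w x / ∑ y, w y - w x * f x / ∑ y, w y * f y| ≤ ε := by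
  set Z := ∑ y, w y
  set Z' := ∑ y, w y * f y
  have hZ : 0 < Z := Finset.sum_pos (fun x _ => hw x) univ_nonempty
  have hZ'_lower : c * Z ≤ Z' := by
    rw [mul_sum]
    exact sum_le_sum fun x _ => by nlinarith [hw x, hf x]
  have hZ'_upper : Z' ≤ c * (1 + ε) * Z := by
    rw [mul_sum]
    exact sum_le_sum fun x _ => by nlinarith [hw x, hf x]
  have hZ' : 0 < Z' := (mul_pos hc hZ).trans_le hZ'_lower
  have hterm : ∀ x, |w x / Z - w x * f x / Z'| ≤ ε * (w x / Z) := fun x => by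
    have hdev : |Z' - Z * f x| ≤ ε * Z' := by
      rw [abs_le]
      constructor <;> nlinarith [hf x]
    rw [div_sub_div _ _ hZ.ne' hZ'.ne',
      show w x * Z' - Z * (w x * f x) = w x * (Z' - Z * f x) by ring, abs_div, abs_mul,
      abs_of_pos (hw x), abs_of_pos (mul_pos hZ hZ'), div_le_iff₀ (by positivity)]
    calc w x * |Z' - Z * f x| ≤ w x * (ε * Z') := mul_le_mul_of_nonneg_left hdev (hw x).le
      _ = ε * (w x / Z) * (Z * Z') := by field_simp
  calc ∑ x, |w x / Z - w x * f x / Z'| ≤ ∑ x, ε * (w x / Z) := sum_le_sum fun x _ => hterm x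
    _ = ε := by rw [← mul_sum, ← sum_div, div_self hZ.ne', mul_one]

lemma one_sub_le_mul_sum_div_sum_mul (hw : ∀ x, 0 < w x) (hc : 0 < c) (hε : 0 ≤ ε)
    (hf : ∀ x, c ≤ f x ∧ f x ≤ c * (1 + ε)) :
    1 - ε ≤ c * (∑ x, w x) / ∑ x, w x * f x := by
  set Z := ∑ y, w y
  have hZ : 0 < Z := Finset.sum_pos (fun x _ => hw x) univ_nonempty
  have hZ'_lower : c * Z ≤ ∑ x, w x * f x := by
    rw [mul_sum]
    exact sum_le_sum fun x _ => by nlinarith [hw x, hf x]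
  have hZ'_upper : ∑ x, w x * f x ≤ c * (1 + ε) * Z := by
    rw [mul_sum]
    exact sum_le_sum fun x _ => by nlinarith [hw x, hf x]
  rw [le_div_iff₀ ((mul_pos hc hZ).trans_le hZ'_lower)]
  nlinarith [mul_pos hc hZ]

end Reweighting

lemma Fin.sum_univ_snoc {β M : Type*} [Fintype β] [AddCommMonoid M] {n : ℕ}
    (g : (Fin (n + 1) → β) → M) :
    ∑ σ, g σ = ∑ x : Fin n → β, ∑ s : β, g (Fin.snoc x s) := by
  rw [← (Fin.snocEquiv fun _ => β).sum_comp, Fintype.sum_prod_type, sum_comm]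
  rfl

namespace NandGadget

variable {n : ℕ} (M : Matrix (Fin n) (Fin n) ℝ) (θ : Fin n → ℝ) {v u : Fin n} (δ : ℝ)

lemma extθ_castSucc (hvu : v ≠ u) (i : Fin n) :
    extθ θ v u δ i.castSucc = θ i + ((if i = v then δ else 0) + (if i = u then δ else 0)) := by
  simp only [extθ, Fin.val_castSucc, i.isLt, dif_pos, Fin.eta]
  by_cases h1 : i = v <;> by_cases h2 : i = u <;> simp_all [Ne.symm hvu]

lemma extM_castSucc_castSucc (hvu : v ≠ u) (i j : Fin n) :
    extM M v u δ i.castSucc j.castSucc =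
      M i j + ((if i = v then (if j = u then -δ else 0) else 0)
        + (if i = u then (if j = v then -δ else 0) else 0)) := by
  simp only [extM, Fin.val_castSucc, i.isLt, j.isLt, dif_pos, Fin.eta]
  congr 1
  by_cases h1 : i = v <;> by_cases h2 : i = u <;> by_cases h3 : j = v <;> by_cases h4 : j = u <;>
    simp_all [Ne.symm hvu]

lemma extM_castSucc_last (hvu : v ≠ u) (i : Fin n) :
    extM M v u δ i.castSucc (Fin.last n) =
      (if i = v then -2 * δ else 0) + (if i = u then -2 * δ else 0) := by
  simp only [extM, Fin.val_castSucc, i.isLt, dif_pos, Fin.eta, Fin.val_last, lt_irrefl,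
    dif_neg, not_false_eq_true]
  by_cases h1 : i = v <;> by_cases h2 : i = u <;> simp_all [Ne.symm hvu]

lemma extM_last_castSucc (hvu : v ≠ u) (j : Fin n) :
    extM M v u δ (Fin.last n) j.castSucc =
      (if j = v then -2 * δ else 0) + (if j = u then -2 * δ else 0) := by
  simp only [extM, Fin.val_castSucc, j.isLt, dif_pos, Fin.eta, Fin.val_last, lt_irrefl,
    dif_neg, not_false_eq_true]
  by_cases h1 : j = v <;> by_cases h2 : j = u <;> simp_all [Ne.symm hvu]

/-- The energy `θ·x + ½ x·Jx` of the three-vertex gadget `J_δ` at spins `a, b, s` of `v, u, v*`. -/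
def energy (δ a b s : ℝ) : ℝ :=
  δ * a + δ * b + 2 * δ * s - δ * (a * b) - 2 * δ * (s * a) - 2 * δ * (s * b)

lemma isingWt_snoc (hvu : v ≠ u) (x : Fin n → Bool) (s : Bool) :
    isingWt (extM M v u δ) (extθ θ v u δ) (Fin.snoc x s) =
      isingWt M θ x * exp (energy δ (spin (x v)) (spin (x u)) (spin s)) := by
  have hlin : ∑ i, extθ θ v u δ i * spin (Fin.snoc (α := fun _ => Bool) x s i)
      = ∑ i, θ i * spin (x i) + (δ * spin (x v) + δ * spin (x u) + 2 * δ * spin s) := by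
    simp only [Fin.sum_univ_castSucc, Fin.snoc_castSucc, Fin.snoc_last, extθ_castSucc θ δ hvu,
      add_mul, ite_mul, zero_mul, sum_add_distrib, sum_ite_eq', mem_univ, if_true]
    simp only [extθ, Fin.val_last, lt_self_iff_false, ↓reduceDIte]
    ring
  have hquad : ∑ i, ∑ j, spin (Fin.snoc (α := fun _ => Bool) x s i) * extM M v u δ i j *
        spin (Fin.snoc (α := fun _ => Bool) x s j)
      = ∑ i, ∑ j, spin (x i) * M i j * spin (x j)
        + (-2 * δ * (spin (x v) * spin (x u)) - 4 * δ * spin s * (spin (x v) + spin (x u))) := by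
    simp only [Fin.sum_univ_castSucc, Fin.snoc_castSucc, Fin.snoc_last,
      extM_castSucc_castSucc M δ hvu, extM_castSucc_last M δ hvu, extM_last_castSucc M δ hvu]
    simp only [mul_add, add_mul, mul_ite, ite_mul, mul_zero, zero_mul, sum_add_distrib,
      sum_ite_eq', mem_univ, if_true, sum_ite_irrel, sum_const_zero]
    simp only [extM, Fin.val_last, lt_self_iff_false, ↓reduceDIte, mul_zero, zero_mul, add_zero]
    ring
  rw [isingWt, isingWt, hlin, hquad, ← exp_add, energy]
  ring_nf

lemma energy_nand (a b : Bool) : energy δ (spin a) (spin b) (spin (!(a && b))) = 3 * δ := by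
  cases a <;> cases b <;> simp only [energy, spin] <;> norm_num <;> ring

lemma energy_and_le {δ : ℝ} (hδ : 0 ≤ δ) (a b : Bool) :
    energy δ (spin a) (spin b) (spin (a && b)) ≤ -δ := by
  cases a <;> cases b <;> simp only [energy, spin] <;> norm_num <;> linarith

def factor (δ : ℝ) (a b : Bool) : ℝ := ∑ s : Bool, exp (energy δ (spin a) (spin b) (spin s))

lemma factor_mem_Icc {δ : ℝ} (hδ : 0 ≤ δ) (a b : Bool) :
    exp (3 * δ) ≤ factor δ a b ∧ factor δ a b ≤ exp (3 * δ) * (1 + exp (-4 * δ)) := by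
  have hsplit : factor δ a b = exp (3 * δ) + exp (energy δ (spin a) (spin b) (spin (a && b))) := by
    rw [factor, Fintype.sum_bool, ← energy_nand δ a b]
    cases a && b <;> simp only [Bool.not_true, Bool.not_false, add_comm]
  have hbad : exp (energy δ (spin a) (spin b) (spin (a && b))) ≤ exp (3 * δ) * exp (-4 * δ) := by
    rw [← exp_add, exp_le_exp]
    linarith [energy_and_le hδ a b]
  rw [hsplit]
  constructor <;> nlinarith [exp_pos (energy δ (spin a) (spin b) (spin (a && b)))]

lemma sum_isingWt_snoc (hvu : v ≠ u) (x : Fin n → Bool) :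
    ∑ s, isingWt (extM M v u δ) (extθ θ v u δ) (Fin.snoc x s) =
      isingWt M θ x * factor δ (x v) (x u) := by
  simp only [isingWt_snoc M θ δ hvu, factor, mul_sum]

lemma sum_isingWt_ext (hvu : v ≠ u) :
    ∑ σ, isingWt (extM M v u δ) (extθ θ v u δ) σ = ∑ x, isingWt M θ x * factor δ (x v) (x u) := by
  simp only [Fin.sum_univ_snoc, sum_isingWt_snoc M θ δ hvu]

lemma sum_isingProb_snoc (hvu : v ≠ u) (x : Fin n → Bool) :
    ∑ s, isingProb (extM M v u δ) (extθ θ v u δ) (Fin.snoc x s) =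
      isingWt M θ x * factor δ (x v) (x u) / ∑ y, isingWt M θ y * factor δ (y v) (y u) := by
  simp only [isingProb, ← sum_div, sum_isingWt_snoc M θ δ hvu, sum_isingWt_ext M θ δ hvu]

lemma isingPr_nand (hvu : v ≠ u) :
    isingPr (extM M v u δ) (extθ θ v u δ)
        (fun σ => σ (Fin.last n) ≠ (σ v.castSucc && σ u.castSucc)) =
      exp (3 * δ) * (∑ x, isingWt M θ x) / ∑ x, isingWt M θ x * factor δ (x v) (x u) := by
  rw [isingPr]
  simp only [isingProb, ← sum_div, sum_isingWt_ext M θ δ hvu, sum_filter, Fin.sum_univ_snoc,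
    Fin.snoc_last, Fin.snoc_castSucc, isingWt_snoc M θ δ hvu, mul_sum]
  congr 1
  refine sum_congr rfl fun x _ => ?_
  rw [Fintype.sum_bool]
  cases h : x v && x u <;> simp [← energy_nand δ (x v) (x u), h, mul_comm]

end NandGadget

open NandGadget in
theorem stmt12_general {n : ℕ} (δ : ℝ) (hδ : 1 < δ)
    (M : Matrix (Fin n) (Fin n) ℝ) (θ : Fin n → ℝ)
    (v u : Fin n) (hvu : v ≠ u) :
    (1 / 2) * (∑ x : Fin n → Bool,
        |isingProb M θ x -
          ∑ s : Bool, isingProb (extM M v u δ) (extθ θ v u δ) (Fin.snoc x s)|)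
      ≤ 5 * Real.exp (-4 * δ) ∧
    1 - 5 * Real.exp (-4 * δ) ≤
      isingPr (extM M v u δ) (extθ θ v u δ)
        (fun σ => σ (Fin.last n) ≠ (σ v.castSucc && σ u.castSucc)) := by
  have hW : ∀ x, 0 < isingWt M θ x := fun x => exp_pos _
  have hF : ∀ x : Fin n → Bool, exp (3 * δ) ≤ factor δ (x v) (x u) ∧
      factor δ (x v) (x u) ≤ exp (3 * δ) * (1 + exp (-4 * δ)) :=
    fun x => factor_mem_Icc (by linarith) _ _
  have ht : 0 < exp (-4 * δ) := exp_pos _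
  constructor
  · have hTV := sum_abs_div_sum_sub_mul_div_sum_le hW (exp_pos _) hF
    simp only [sum_isingProb_snoc M θ δ hvu]
    simp only [isingProb]
    linarith
  · rw [isingPr_nand M θ δ hvu]
    linarith [one_sub_le_mul_sum_div_sum_mul hW (exp_pos _) ht.le hF]

/-- Fusing a NAND gadget onto the vertices `v ≠ u` of an Ising model `(M, θ)`:
(1) the law of the restriction of `X'` to the original `n` vertices is within total variation
distance `5e^{-4δ}` of the law of `X`, and (2) `X'_{v*}` is the (±1-valued) NAND of `X'_v` and
`X'_u` with probability at least `1 - 5e^{-4δ}`. -/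
theorem stmt12 {n : ℕ} (δ : ℝ) (hδ : 1 < δ)
    (M : Matrix (Fin n) (Fin n) ℝ) (θ : Fin n → ℝ)
    (hsymm : M.IsSymm) (hdiag : ∀ i, M i i = 0)
    (v u : Fin n) (hvu : v ≠ u) :
    (1 / 2) * (∑ x : Fin n → Bool,
        |isingProb M θ x -
          ∑ s : Bool, isingProb (extM M v u δ) (extθ θ v u δ) (Fin.snoc x s)|)
      ≤ 5 * Real.exp (-4 * δ) ∧
    1 - 5 * Real.exp (-4 * δ) ≤
      isingPr (extM M v u δ) (extθ θ v u δ)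
        (fun σ => σ (Fin.last n) ≠ (σ v.castSucc && σ u.castSucc)) :=
  stmt12_general δ hδ M θ v u hvu
end
end

section
/- Let m > 0 and let P and Q be probability distributions on a finite set Ω such that Q(x) ≥ e^{−m} for all x ∈ Ω. Then the Kullback–Leibler divergence satisfies D_KL(P‖Q) ≤ e^m · TV(P,Q). -/
open Finset Real

noncomputable section

/-- If `Q(x) ≥ e^{-m}` for all `x`, then the Kullback–Leibler divergence
`D_KL(P‖Q) = Σ_x P(x) ln(P(x)/Q(x))` is at most `e^m · TV(P,Q)`.  (Since `Real.log 0 = 0` in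
Mathlib, the convention `0·ln 0 = 0` is automatic.) -/
theorem stmt15 {Ω : Type*} [Fintype Ω] (m : ℝ) (hm : 0 < m)
    (P Q : Ω → ℝ) (hPpos : ∀ x, 0 ≤ P x) (hPsum : ∑ x, P x = 1)
    (hQpos : ∀ x, Real.exp (-m) ≤ Q x) (hQsum : ∑ x, Q x = 1) :
    ∑ x, P x * Real.log (P x / Q x) ≤
      Real.exp m * ((1 / 2) * ∑ x, |P x - Q x|) := by
  have hP1 : ∀ x, P x ≤ 1 := by
    intro x
    rw [← hPsum]
    exact Finset.single_le_sum (fun y _ => hPpos y) (Finset.mem_univ x)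
  have hQ0 : ∀ x, 0 < Q x := fun x => lt_of_lt_of_le (Real.exp_pos _) (hQpos x)
  have hem : Real.exp m * Real.exp (-m) = 1 := by
    rw [← Real.exp_add]; simp
  have key : ∀ x, P x * Real.log (P x / Q x) ≤ Real.exp m * max (P x - Q x) 0 := by
    intro x
    rcases le_or_gt (P x) (Q x) with h | h
    · have hmax : max (P x - Q x) 0 = 0 := max_eq_right (by linarith)
      rw [hmax, mul_zero]
      rcases eq_or_lt_of_le (hPpos x) with h0 | h0
      · rw [← h0]; simp
      · apply mul_nonpos_of_nonneg_of_nonpos (hPpos x)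
        apply Real.log_nonpos
        · exact (div_pos h0 (hQ0 x)).le
        · rw [div_le_one (hQ0 x)]; exact h
    · have hmax : max (P x - Q x) 0 = P x - Q x := max_eq_left (by linarith)
      rw [hmax]
      have hlog : Real.log (P x / Q x) ≤ P x / Q x - 1 :=
        Real.log_le_sub_one_of_pos (div_pos (lt_of_le_of_lt (hQ0 x).le h) (hQ0 x))
      have hsub : 0 ≤ P x / Q x - 1 := by
        rw [sub_nonneg, le_div_iff₀ (hQ0 x), one_mul]; linarith
      have h2 : P x * Real.log (P x / Q x) ≤ P x / Q x - 1 :=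
        calc P x * Real.log (P x / Q x) ≤ P x * (P x / Q x - 1) :=
              mul_le_mul_of_nonneg_left hlog (hPpos x)
          _ ≤ 1 * (P x / Q x - 1) := mul_le_mul_of_nonneg_right (hP1 x) hsub
          _ = P x / Q x - 1 := one_mul _
      have h3 : P x / Q x - 1 = (P x - Q x) / Q x := by
        rw [sub_div, div_self (hQ0 x).ne']
      have h4 : (P x - Q x) / Q x ≤ Real.exp m * (P x - Q x) := by
        rw [div_le_iff₀ (hQ0 x)]
        have h5 : Real.exp m * (P x - Q x) * Real.exp (-m) ≤
            Real.exp m * (P x - Q x) * Q x := by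
          apply mul_le_mul_of_nonneg_left (hQpos x)
          have := Real.exp_pos m
          nlinarith
        nlinarith
      linarith
  have hsum0 : ∑ x, (P x - Q x) = 0 := by
    rw [Finset.sum_sub_distrib, hPsum, hQsum]; ring
  calc ∑ x, P x * Real.log (P x / Q x)
      ≤ ∑ x, Real.exp m * max (P x - Q x) 0 :=
        Finset.sum_le_sum fun x _ => key x
    _ = Real.exp m * ∑ x, max (P x - Q x) 0 := by rw [← Finset.mul_sum]
    _ = Real.exp m * ((1 / 2) * ∑ x, |P x - Q x|) := by
        congr 1
        have hmx : ∀ x : Ω, max (P x - Q x) 0 = ((P x - Q x) + |P x - Q x|) / 2 := by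
          intro x
          rcases le_or_gt 0 (P x - Q x) with h | h
          · rw [max_eq_left h, abs_of_nonneg h]; ring
          · rw [max_eq_right h.le, abs_of_neg h]; ring
        simp_rw [hmx]
        rw [← Finset.sum_div, Finset.sum_add_distrib, hsum0]
        ring
end
end

section
/- Let b > 0 and d, n positive integers. Let θ ∈ [−b,b]ⁿ and M an n×n symmetric matrix with M_{i,i} = 0 for all i, |M_{i,j}| ≤ b for all i, j, and each row of M having at most d nonzero entries. Let X ∼ I_{(M,θ)}. Then: (1) for every v ∈ [n], every s ∈ {−1,1}, and every x ∈ {−1,1}ⁿ, P[X_v = s | X_{−v} = x_{−v}] ≥ e^{−2b−2bd}/2; and (2) for every subset T ⊆ [n] and every x ∈ {−1,1}ⁿ, P[X_T = x_T] ≥ e^{−2b(1+d)|T|}·2^{−|T|}. -/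
open Finset Real
open scoped Classical

noncomputable section

/-!
Changing the spin at `v` from `σ v` to `s` multiplies the Ising weight by
`exp ((s - σ v) * (θ v + (M σ) v))`, and the local field `θ v + (M σ) v` has absolute value at most
`b (1 + d)`; so two configurations that differ only at `v` have weights within a factor
`e^{2b(1+d)}` of each other. Pairing each configuration with `σ v ≠ s` with the one obtained by
setting its spin at `v` to `s` shows that, for any event `C` insensitive to the spin at `v`,
`P[X_v = s ∧ C] ≥ P[C] / (1 + e^{2b(1+d)}) ≥ e^{-2b(1+d)} / 2 · P[C]`. Part (1) takes
`C = {X_{-v} = x_{-v}}`; part (2) adds the sites of `T` one at a time.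
-/

open Matrix

lemma abs_spin (s : Bool) : |spin s| = 1 := by cases s <;> simp [spin]

def spinVec {n : ℕ} (σ : Fin n → Bool) : Fin n → ℝ := fun i => spin (σ i)

lemma isingWt_eq {n : ℕ} (M : Matrix (Fin n) (Fin n) ℝ) (θ : Fin n → ℝ) (σ : Fin n → Bool) :
    isingWt M θ σ = exp (θ ⬝ᵥ spinVec σ + 1 / 2 * (spinVec σ ⬝ᵥ M *ᵥ spinVec σ)) := by
  simp only [isingWt, spinVec, dotProduct, mulVec, Finset.mul_sum, mul_assoc]

lemma spinVec_update {n : ℕ} (σ : Fin n → Bool) (v : Fin n) (s : Bool) :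
    spinVec (Function.update σ v s) = spinVec σ + Pi.single v (spin s - spin (σ v)) := by
  ext i
  by_cases h : i = v
  · subst h; simp [spinVec]
  · simp [spinVec, h]

lemma isingWt_update {n : ℕ} {M : Matrix (Fin n) (Fin n) ℝ} (hsymm : M.IsSymm)
    (hdiag : ∀ i, M i i = 0) (θ : Fin n → ℝ) (σ : Fin n → Bool) (v : Fin n) (s : Bool) :
    isingWt M θ (Function.update σ v s) =
      exp ((spin s - spin (σ v)) * (θ v + (M *ᵥ spinVec σ) v)) * isingWt M θ σ := by
  set x := spinVec σ
  set Δ := spin s - spin (σ v)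
  have hquad : (x + Pi.single v Δ) ⬝ᵥ M *ᵥ (x + Pi.single v Δ) =
      x ⬝ᵥ M *ᵥ x + 2 * Δ * (M *ᵥ x) v := by
    have hcol : x ⬝ᵥ M *ᵥ Pi.single v Δ = Δ * (M *ᵥ x) v := by
      rw [dotProduct_mulVec, dotProduct_single, ← mulVec_transpose, hsymm.eq]
      ring
    simp only [mulVec_add, dotProduct_add, add_dotProduct, single_dotProduct, hcol]
    simp [hdiag]
    ring
  rw [isingWt_eq, isingWt_eq, spinVec_update, hquad, dotProduct_add, dotProduct_single, ← exp_add]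
  congr 1
  ring

lemma abs_sum_mul_le_of_card_support_le {ι : Type*} [Fintype ι] {a x : ι → ℝ} {b : ℝ} {d : ℕ}
    (hb : 0 ≤ b) (ha : ∀ j, |a j| ≤ b) (hx : ∀ j, |x j| ≤ 1)
    (hsupp : (univ.filter fun j => a j ≠ 0).card ≤ d) :
    |∑ j, a j * x j| ≤ b * d := by
  calc |∑ j, a j * x j| ≤ ∑ j, |a j| := by
        refine (abs_sum_le_sum_abs _ _).trans (sum_le_sum fun j _ => ?_)
        rw [abs_mul]
        exact mul_le_of_le_one_right (abs_nonneg _) (hx j)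
    _ = ∑ j ∈ univ.filter fun j => a j ≠ 0, |a j| := by
        rw [sum_filter_of_ne]
        intro j _ hj
        simpa using hj
    _ ≤ (univ.filter fun j => a j ≠ 0).card • b := sum_le_card_nsmul _ _ _ fun j _ => ha j
    _ ≤ b * d := by
        rw [nsmul_eq_mul, mul_comm]
        gcongr

lemma isingWt_le_exp_mul_isingWt {n : ℕ} {M : Matrix (Fin n) (Fin n) ℝ} (hsymm : M.IsSymm)
    (hdiag : ∀ i, M i i = 0) {θ : Fin n → ℝ} {b : ℝ} {d : ℕ} {v : Fin n} (hθ : |θ v| ≤ b)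
    (hrow : ∀ j, |M v j| ≤ b) (hsparse : (univ.filter fun j => M v j ≠ 0).card ≤ d)
    {σ τ : Fin n → Bool} (hστ : ∀ u ≠ v, σ u = τ u) :
    isingWt M θ σ ≤ exp (2 * b * (1 + d)) * isingWt M θ τ := by
  have hσ : σ = Function.update τ v (σ v) := by
    ext u
    by_cases hu : u = v
    · simp [hu]
    · simp [hu, hστ u hu]
  have hΔ : |spin (σ v) - spin (τ v)| ≤ 2 := by
    have := abs_sub (spin (σ v)) (spin (τ v))
    rw [abs_spin, abs_spin] at this
    linarith
  have hfield : |θ v + (M *ᵥ spinVec τ) v| ≤ b * (1 + d) := by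
    have hb : 0 ≤ b := (abs_nonneg _).trans hθ
    have := abs_sum_mul_le_of_card_support_le hb hrow (fun j => (abs_spin (τ j)).le) hsparse
    calc |θ v + (M *ᵥ spinVec τ) v| ≤ |θ v| + |(M *ᵥ spinVec τ) v| := abs_add_le _ _
      _ ≤ b + b * d := add_le_add hθ this
      _ = b * (1 + d) := by ring
  rw [hσ, isingWt_update hsymm hdiag]
  refine mul_le_mul_of_nonneg_right (exp_le_exp.mpr ?_) (exp_pos _).le
  calc _ ≤ |(spin (σ v) - spin (τ v)) * (θ v + (M *ᵥ spinVec τ) v)| := le_abs_self _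
    _ ≤ 2 * (b * (1 + d)) := by rw [abs_mul]; exact mul_le_mul hΔ hfield (abs_nonneg _) zero_le_two
    _ = 2 * b * (1 + d) := by ring

lemma sum_filter_le_one_add_mul_sum_filter {ι : Type*} [Fintype ι] [DecidableEq ι]
    (w : (ι → Bool) → ℝ) {K : ℝ}
    {v : ι} (hw : ∀ σ τ : ι → Bool, (∀ u ≠ v, σ u = τ u) → w σ ≤ K * w τ)
    {C : (ι → Bool) → Prop} (hC : ∀ σ t, C σ → C (Function.update σ v t)) (s : Bool) :
    ∑ σ ∈ univ.filter C, w σ ≤ (1 + K) * ∑ σ ∈ univ.filter (fun σ => σ v = s ∧ C σ), w σ := by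
  set A := univ.filter (fun σ => σ v = s ∧ C σ)
  set B := univ.filter (fun σ => σ v ≠ s ∧ C σ)
  have hsplit : ∑ σ ∈ univ.filter C, w σ = ∑ σ ∈ A, w σ + ∑ σ ∈ B, w σ := by
    rw [← sum_filter_add_sum_filter_not _ (fun σ => σ v = s), filter_filter, filter_filter]
    congr 2 <;> ext σ <;> simp [A, B, and_comm]
  have hBA : ∑ σ ∈ B, w σ = ∑ σ ∈ A, w (Function.update σ v !s) := by
    refine (sum_nbij' (fun σ : ι → Bool => Function.update σ v !s)
      (fun σ : ι → Bool => Function.update σ v s)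
      ?_ ?_ ?_ ?_ fun _ _ => rfl).symm
    · intro σ hσ
      simp only [A, B, mem_filter, mem_univ, true_and] at hσ ⊢
      exact ⟨by simp, hC σ _ hσ.2⟩
    · intro σ hσ
      simp only [A, B, mem_filter, mem_univ, true_and] at hσ ⊢
      exact ⟨by simp, hC σ _ hσ.2⟩
    · intro σ hσ
      simp only [A, mem_filter, mem_univ, true_and] at hσ
      simp [← hσ.1]
    · intro σ hσ
      simp only [B, mem_filter, mem_univ, true_and] at hσ
      have : σ v = !s := by cases s <;> simpa using hσ.1
      simp [← this]
  have hBle : ∑ σ ∈ B, w σ ≤ K * ∑ σ ∈ A, w σ := by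
    rw [hBA, mul_sum]
    refine sum_le_sum fun σ _ => hw _ _ fun u hu => ?_
    simp [hu]
  rw [hsplit]
  linarith

section IsingPr

variable {n : ℕ} (M : Matrix (Fin n) (Fin n) ℝ) (θ : Fin n → ℝ)

lemma sum_isingWt_pos : 0 < ∑ τ, isingWt M θ τ :=
  sum_pos (fun _ _ => exp_pos _) univ_nonempty

lemma isingPr_eq_sum_div (A : (Fin n → Bool) → Prop) :
    isingPr M θ A = (∑ σ ∈ univ.filter A, isingWt M θ σ) / ∑ τ, isingWt M θ τ := by
  simp only [isingPr, isingProb, sum_div]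

lemma isingPr_pos {A : (Fin n → Bool) → Prop} {σ : Fin n → Bool} (hσ : A σ) :
    0 < isingPr M θ A := by
  rw [isingPr_eq_sum_div]
  exact div_pos (sum_pos (fun _ _ => exp_pos _) ⟨σ, by simpa using hσ⟩) (sum_isingWt_pos M θ)

lemma isingPr_nonneg (A : (Fin n → Bool) → Prop) : 0 ≤ isingPr M θ A := by
  rw [isingPr_eq_sum_div]
  exact div_nonneg (sum_nonneg fun _ _ => (exp_pos _).le) (sum_isingWt_pos M θ).le

lemma isingPr_true : isingPr M θ (fun _ => True) = 1 := by
  rw [isingPr_eq_sum_div, filter_true, div_self (sum_isingWt_pos M θ).ne']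

lemma isingPr_le_one_add_mul_isingPr_and {K : ℝ} {v : Fin n}
    (hw : ∀ σ τ : Fin n → Bool, (∀ u ≠ v, σ u = τ u) → isingWt M θ σ ≤ K * isingWt M θ τ)
    {C : (Fin n → Bool) → Prop} (hC : ∀ σ t, C σ → C (Function.update σ v t)) (s : Bool) :
    isingPr M θ C ≤ (1 + K) * isingPr M θ (fun σ => σ v = s ∧ C σ) := by
  rw [isingPr_eq_sum_div, isingPr_eq_sum_div, ← mul_div_assoc]
  refine div_le_div_of_nonneg_right ?_ (sum_isingWt_pos M θ).le
  refine (sum_filter_le_one_add_mul_sum_filter _ hw hC s).trans_eq ?_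
  congr 2
  ext
  simp

lemma pow_card_le_isingPr_forall_mem {κ : ℝ} (hκ : 0 ≤ κ)
    (hstep : ∀ v s (C : (Fin n → Bool) → Prop), (∀ σ t, C σ → C (Function.update σ v t)) →
      κ * isingPr M θ C ≤ isingPr M θ (fun σ => σ v = s ∧ C σ))
    (T : Finset (Fin n)) (x : Fin n → Bool) :
    κ ^ T.card ≤ isingPr M θ (fun σ => ∀ w ∈ T, σ w = x w) := by
  induction T using Finset.induction_on with
  | empty => simp [isingPr_true]
  | insert v S hv ih =>
    have hC : ∀ σ t, (∀ w ∈ S, σ w = x w) → ∀ w ∈ S, Function.update σ v t w = x w :=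
      fun σ t hσ w hw => by rw [Function.update_of_ne (ne_of_mem_of_not_mem hw hv)]; exact hσ w hw
    calc κ ^ (insert v S).card = κ * κ ^ S.card := by rw [card_insert_of_notMem hv, pow_succ']
      _ ≤ κ * isingPr M θ (fun σ => ∀ w ∈ S, σ w = x w) := by gcongr
      _ ≤ isingPr M θ (fun σ => σ v = x v ∧ ∀ w ∈ S, σ w = x w) := hstep v (x v) _ hC
      _ = isingPr M θ (fun σ => ∀ w ∈ insert v S, σ w = x w) := by simp only [forall_mem_insert]

end IsingPr

lemma exp_neg_div_two_mul_isingPr_le_isingPr_and {n : ℕ} {b : ℝ} {d : ℕ} {θ : Fin n → ℝ}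
    (hθ : ∀ i, |θ i| ≤ b) {M : Matrix (Fin n) (Fin n) ℝ} (hsymm : M.IsSymm)
    (hdiag : ∀ i, M i i = 0) (hbound : ∀ i j, |M i j| ≤ b)
    (hsparse : ∀ i, (univ.filter fun j => M i j ≠ 0).card ≤ d) (v : Fin n) (s : Bool)
    {C : (Fin n → Bool) → Prop} (hC : ∀ σ t, C σ → C (Function.update σ v t)) :
    exp (-(2 * b * (1 + d))) / 2 * isingPr M θ C ≤ isingPr M θ (fun σ => σ v = s ∧ C σ) := by
  set c := 2 * b * (1 + d)
  have hc : 0 ≤ c := by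
    have : 0 ≤ b := (abs_nonneg _).trans (hbound v v)
    positivity
  have hP : isingPr M θ C ≤ (1 + exp c) * isingPr M θ (fun σ => σ v = s ∧ C σ) :=
    isingPr_le_one_add_mul_isingPr_and M θ
      (fun _ _ h => isingWt_le_exp_mul_isingWt hsymm hdiag (hθ v) (hbound v) (hsparse v) h) hC s
  have hK : 1 + exp c ≤ 2 * exp c := by linarith [one_le_exp hc]
  calc exp (-c) / 2 * isingPr M θ C
      ≤ exp (-c) / 2 * (2 * exp c * isingPr M θ (fun σ => σ v = s ∧ C σ)) := by
        gcongr
        exact hP.trans (by gcongr; exact isingPr_nonneg M θ _)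
    _ = isingPr M θ (fun σ => σ v = s ∧ C σ) := by
        rw [exp_neg]
        field_simp

theorem stmt17_general {n : ℕ} (b : ℝ) (d : ℕ)
    (θ : Fin n → ℝ) (hθ : ∀ i, |θ i| ≤ b)
    (M : Matrix (Fin n) (Fin n) ℝ)
    (hsymm : M.IsSymm) (hdiag : ∀ i, M i i = 0)
    (hbound : ∀ i j, |M i j| ≤ b)
    (hsparse : ∀ i, (Finset.univ.filter (fun j => M i j ≠ 0)).card ≤ d) :
    (∀ (v : Fin n) (s : Bool) (x : Fin n → Bool),
      Real.exp (-2 * b - 2 * b * d) / 2 ≤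
        isingCond M θ (fun σ => σ v = s) (fun σ => ∀ w, w ≠ v → σ w = x w)) ∧
    (∀ (T : Finset (Fin n)) (x : Fin n → Bool),
      Real.exp (-2 * b * (1 + d) * T.card) * ((2 : ℝ) ^ (T.card : ℕ))⁻¹ ≤
        isingPr M θ (fun σ => ∀ w ∈ T, σ w = x w)) := by
  have hstep := fun v s C =>
    exp_neg_div_two_mul_isingPr_le_isingPr_and (θ := θ) hθ hsymm hdiag hbound hsparse v s (C := C)
  refine ⟨fun v s x => ?_, fun T x => ?_⟩
  · have hx : ∀ w, w ≠ v → x w = x w := fun _ _ => rfl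
    have hexp : -2 * b - 2 * b * d = -(2 * b * (1 + d)) := by ring
    rw [isingCond, le_div_iff₀ (isingPr_pos M θ hx), hexp]
    have hC : ∀ σ t, (∀ w, w ≠ v → σ w = x w) → ∀ w, w ≠ v → Function.update σ v t w = x w :=
      fun σ t hσ w hw => (Function.update_of_ne hw t σ).trans (hσ w hw)
    exact hstep v s _ hC
  · convert pow_card_le_isingPr_forall_mem M θ (by positivity) hstep T x using 1
    rw [div_pow, ← exp_nat_mul, div_eq_mul_inv]
    congr 2
    ring

/-- For a bounded-degree bounded-weight Ising model: (1) each conditional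
probability `P[X_v = s | X_{-v} = x_{-v}]` is at least `e^{-2b-2bd}/2`, and (2) the probability
of any partial assignment on a set `T` is at least `e^{-2b(1+d)|T|} 2^{-|T|}`. -/
theorem stmt17 {n : ℕ} (b : ℝ) (d : ℕ) (hb : 0 < b) (hd : 0 < d) (hn : 0 < n)
    (θ : Fin n → ℝ) (hθ : ∀ i, |θ i| ≤ b)
    (M : Matrix (Fin n) (Fin n) ℝ)
    (hsymm : M.IsSymm) (hdiag : ∀ i, M i i = 0)
    (hbound : ∀ i j, |M i j| ≤ b)
    (hsparse : ∀ i, (Finset.univ.filter (fun j => M i j ≠ 0)).card ≤ d) :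
    (∀ (v : Fin n) (s : Bool) (x : Fin n → Bool),
      Real.exp (-2 * b - 2 * b * d) / 2 ≤
        isingCond M θ (fun σ => σ v = s) (fun σ => ∀ w, w ≠ v → σ w = x w)) ∧
    (∀ (T : Finset (Fin n)) (x : Fin n → Bool),
      Real.exp (-2 * b * (1 + d) * T.card) * ((2 : ℝ) ^ (T.card : ℕ))⁻¹ ≤
        isingPr M θ (fun σ => ∀ w ∈ T, σ w = x w)) :=
  stmt17_general b d θ hθ M hsymm hdiag hbound hsparse
end
end
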